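/- Among all constant symmetric positive definite metrics M on a domain of volume vol satisfying the complexity constraint sqrt(det M) · vol = C, the metric M = (C/vol)^{2/d} det(H)^{−1/d} H minimizes trace(M^{−1} H), where H is a fixed symmetric positive definite matrix; the minimal value is d (C/vol)^{−2/d} det(H)^{1/d}. -/

import Mathlib

/-!
Write `H = R * R` with `R` positive definite. Then `trace (M⁻¹ * H) = trace (R * M⁻¹ * R)`, and
`R * M⁻¹ * R` is positive definite with determinant `det H / det M`, so AM–GM on its eigenvalues
gives `trace (M⁻¹ * H) ≥ d * (det H / det M) ^ (1 / d)`. The constraint pins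
`det M = (C / vol) ^ 2`, and the multiple `c • H` meeting the constraint attains the
bound since `(c • H)⁻¹ * H = c⁻¹ • 1`.
-/

open Matrix

namespace Matrix
variable {n : Type*} [Fintype n] [DecidableEq n]

theorem PosDef.card_mul_det_rpow_le_trace {S : Matrix n n ℝ} (hS : S.PosDef) :
    Fintype.card n * S.det ^ ((1 : ℝ) / Fintype.card n) ≤ S.trace := by
  rcases isEmpty_or_nonempty n with _ | _
  · simp
  have hcard : (0 : ℝ) < Fintype.card n := by exact_mod_cast Fintype.card_pos
  have amgm := Real.geom_mean_le_arith_mean Finset.univ (fun _ => (1 : ℝ))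
    hS.isHermitian.eigenvalues (fun _ _ => zero_le_one) (by simpa using hcard)
    (fun i _ => (hS.eigenvalues_pos i).le)
  simp only [Real.rpow_one, one_mul, Finset.sum_const, Finset.card_univ, nsmul_eq_mul,
    mul_one] at amgm
  rw [hS.isHermitian.det_eq_prod_eigenvalues, hS.isHermitian.trace_eq_sum_eigenvalues, one_div,
    mul_comm, ← le_div_iff₀ hcard]
  simpa using amgm

open scoped MatrixOrder in
theorem PosDef.exists_posDef_mul_self {H : Matrix n n ℝ} (hH : H.PosDef) :
    ∃ R : Matrix n n ℝ, R.PosDef ∧ R * R = H :=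
  ⟨CFC.sqrt H, (hH.isStrictlyPositive.sqrt).posDef, CFC.sqrt_mul_sqrt_self H hH.posSemidef.nonneg⟩

theorem PosDef.card_mul_det_div_rpow_le_trace_inv_mul {M H : Matrix n n ℝ} (hM : M.PosDef)
    (hH : H.PosDef) :
    Fintype.card n * (H.det / M.det) ^ ((1 : ℝ) / Fintype.card n) ≤ (M⁻¹ * H).trace := by
  obtain ⟨R, hR, rfl⟩ := hH.exists_posDef_mul_self
  have hS : (Rᴴ * M⁻¹ * R).PosDef :=
    hM.inv.conjTranspose_mul_mul_same (mulVec_injective_of_isUnit hR.isUnit)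
  rw [hR.isHermitian.eq] at hS
  have hdet : (R * M⁻¹ * R).det = (R * R).det / M.det := by
    rw [det_mul, det_mul, det_mul, det_nonsing_inv, Ring.inverse_eq_inv']
    ring
  have htr : (M⁻¹ * (R * R)).trace = (R * M⁻¹ * R).trace := by
    rw [← mul_assoc, trace_mul_cycle]
  rw [← hdet, htr]
  exact hS.card_mul_det_rpow_le_trace

theorem inv_smul_mul_self {K : Type*} [Field K] {H : Matrix n n K} (hH : IsUnit H.det) {c : K}
    (hc : c ≠ 0) : (c • H)⁻¹ * H = c⁻¹ • (1 : Matrix n n K) := by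
  have hinv : (c • H)⁻¹ = c⁻¹ • H⁻¹ := inv_eq_left_inv <| by
    rw [smul_mul_smul_comm, inv_mul_cancel₀ hc, nonsing_inv_mul H hH, one_smul]
  rw [hinv, smul_mul, nonsing_inv_mul H hH]

end Matrix

lemma Real.rpow_mul_rpow_neg_eq_div_rpow {x y : ℝ} (hx : 0 ≤ x) (hy : 0 ≤ y) (p : ℝ) :
    x ^ p * y ^ (-p) = (x / y) ^ p := by
  rw [Real.rpow_neg hy, Real.div_rpow hx hy, div_eq_mul_inv]

/-- Constant-data optimal metric: `M₀ = (C/vol)^{2/d} det(H)^{-1/d} H` satisfies the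
complexity constraint `√(det M₀) = C/vol` and minimizes `trace(M⁻¹ H)` among all SPD
metrics satisfying this constraint, with minimal value `d (C/vol)^{-2/d} det(H)^{1/d}`. -/
theorem optimal_constant_metric
    {d : ℕ} (hd : 1 ≤ d) (H : Matrix (Fin d) (Fin d) ℝ) (hH : H.PosDef)
    (C vol : ℝ) (hC : 0 < C) (hvol : 0 < vol) :
    Real.sqrt ((((C / vol) ^ ((2:ℝ)/d) * H.det ^ (-(1:ℝ)/d)) • H).det) = C / vol ∧
    (((((C / vol) ^ ((2:ℝ)/d) * H.det ^ (-(1:ℝ)/d)) • H)⁻¹ * H).trace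
        = (d : ℝ) * (C / vol) ^ (-(2:ℝ)/d) * H.det ^ ((1:ℝ)/d)) ∧
    (∀ M : Matrix (Fin d) (Fin d) ℝ, M.PosDef → Real.sqrt M.det = C / vol →
      (d : ℝ) * (C / vol) ^ (-(2:ℝ)/d) * H.det ^ ((1:ℝ)/d) ≤ (M⁻¹ * H).trace) := by
  set a := C / vol
  have ha : 0 < a := div_pos hC hvol
  have hdetH : 0 < H.det := hH.det_pos
  have hpow (q : ℝ) : a ^ (2 * q) = (a ^ 2) ^ q := by
    rw [Real.rpow_mul ha.le, Real.rpow_two]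
  have hscale : a ^ ((2:ℝ)/d) * H.det ^ (-(1:ℝ)/d) = (a ^ 2 / H.det) ^ ((1:ℝ)/d) := by
    rw [← Real.rpow_mul_rpow_neg_eq_div_rpow (by positivity) hdetH.le, ← hpow]
    ring_nf
  have hscale_inv : a ^ (-(2:ℝ)/d) * H.det ^ ((1:ℝ)/d) = (H.det / a ^ 2) ^ ((1:ℝ)/d) := by
    rw [mul_comm, ← Real.rpow_mul_rpow_neg_eq_div_rpow hdetH.le (by positivity), ← hpow]
    ring_nf
  refine ⟨?_, ?_, fun M hM hdetM => ?_⟩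
  · rw [hscale, det_smul, Fintype.card_fin, one_div,
      Real.rpow_inv_natCast_pow (by positivity) (by omega), div_mul_cancel₀ _ hdetH.ne',
      Real.sqrt_sq ha.le]
  · rw [inv_smul_mul_self hdetH.ne'.isUnit (by positivity), trace_smul, trace_one, Fintype.card_fin,
      mul_assoc, hscale_inv, hscale, ← Real.inv_rpow (by positivity), inv_div, smul_eq_mul,
      mul_comm]
  · have hdetM' : M.det = a ^ 2 := by rw [← Real.sq_sqrt hM.det_pos.le, hdetM]
    rw [mul_assoc, hscale_inv, ← hdetM']
    simpa only [Fintype.card_fin] using hM.card_mul_det_div_rpow_le_trace_inv_mul hH
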